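/- Let ρ ∈ (0,1), P_S > 0, P_R > 0, P_Δ > 0, k ∈ (0,1], σ_R² > 0, σ_D² > 0, and Ω_SR, Ω_RR, Ω_RD > 0. Let U, V, W be mutually independent real random variables, exponentially distributed with means Ω_SR, Ω_RR, Ω_RD respectively. Define Y = min{ (1−ρ)·P_S·U / ((1−ρ)·k·(P_R+P_Δ)·V + σ_R²), P_R·W/(P_Δ·W + σ_D²) }. Then for every x with 0 ≤ x < P_R/P_Δ, P(Y ≤ x) = 1 − (P_S·Ω_SR/(P_S·Ω_SR + k·(P_R+P_Δ)·Ω_RR·x))·exp(−(σ_R²/((1−ρ)·P_S·Ω_SR))·x − (σ_D²/((P_R − P_Δ·x)·Ω_RD))·x), and for every x ≥ P_R/P_Δ, P(Y ≤ x) = 1. -/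

import Mathlib

/-!
Write `S` and `T` for the two hop SINRs, so that `Y = min S T` and, by independence,
`P(Y > x) = P(S > x) · P(T > x)`. Given `V = v`, the event `S > x` says that `U` exceeds an affine
function of `v`, so `P(S > x)` is an exponential tail averaged over `V`: a Laplace transform of the
exponential law, which produces the rational factor. The second hop saturates,
`P_R W / (P_Δ W + σ_D²) < P_R / P_Δ`: below that level `T > x` is the tail event
`W > x σ_D² / (P_R - P_Δ x)`, above it `T > x` is impossible.
-/

open MeasureTheory ProbabilityTheory Real Set
open scoped ENNReal

namespace ProbabilityTheory

lemma expMeasure_Iio_zero (r : ℝ) : expMeasure r (Iio 0) = 0 := by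
  rw [expMeasure, gammaMeasure, withDensity_apply _ measurableSet_Iio]
  exact lintegral_exponentialPDF_of_nonpos le_rfl

lemma ae_nonneg_expMeasure (r : ℝ) : ∀ᵐ w ∂expMeasure r, 0 ≤ w := by
  rw [ae_iff]
  push Not
  exact expMeasure_Iio_zero r

lemma expMeasure_Ioi {r t : ℝ} (hr : 0 < r) (ht : 0 ≤ t) :
    expMeasure r (Ioi t) = ENNReal.ofReal (exp (-(r * t))) := by
  have := isProbabilityMeasure_expMeasure hr
  have hexp_le : exp (-(r * t)) ≤ 1 := exp_le_one_iff.2 (by nlinarith)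
  rw [← compl_Iic, prob_compl_eq_one_sub measurableSet_Iic, ← ofReal_cdf, cdf_expMeasure_eq hr,
    if_pos ht, ← ENNReal.ofReal_one, ← ENNReal.ofReal_sub _ (sub_nonneg.2 hexp_le),
    sub_sub_cancel]

lemma lintegral_exp_neg_mul_expMeasure {r a : ℝ} (hr : 0 < r) (ha : 0 ≤ a) :
    ∫⁻ v, ENNReal.ofReal (exp (-(a * v))) ∂expMeasure r = ENNReal.ofReal (r / (r + a)) := by
  have hra : 0 < r + a := by linarith
  have hdensity (v : ℝ) : exponentialPDF r v * ENNReal.ofReal (exp (-(a * v)))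
      = ENNReal.ofReal (r / (r + a)) * exponentialPDF (r + a) v := by
    rcases lt_or_ge v 0 with hv | hv
    · simp [exponentialPDF_of_neg hv]
    · rw [exponentialPDF_of_nonneg hv, exponentialPDF_of_nonneg hv,
        ← ENNReal.ofReal_mul (by positivity), ← ENNReal.ofReal_mul (by positivity), mul_assoc,
        ← exp_add]
      field_simp
      ring_nf
  rw [expMeasure, gammaMeasure, lintegral_withDensity_eq_lintegral_mul _
    (show Measurable (gammaPDF 1 r) from (measurable_gammaPDFReal 1 r).ennreal_ofReal)
    (by fun_prop)]
  change ∫⁻ v, exponentialPDF r v * ENNReal.ofReal (exp (-(a * v))) = _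
  simp_rw [hdensity]
  rw [lintegral_const_mul _ (show Measurable (exponentialPDF (r + a)) from
      (measurable_exponentialPDFReal _).ennreal_ofReal),
    lintegral_exponentialPDF_eq_one hra, mul_one]

lemma expMeasure_lt_mul_div {r a D x : ℝ} (hr : 0 < r) (ha : 0 < a) (hD : 0 < D) (hx : 0 ≤ x) :
    expMeasure r {u | x < a * u / D} = ENNReal.ofReal (exp (-(r * (x * D / a)))) := by
  have hset : {u | x < a * u / D} = Ioi (x * D / a) := by
    ext u
    rw [mem_ofPred_eq, mem_Ioi, lt_div_iff₀ hD, div_lt_iff₀ ha, mul_comm u]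
  rw [hset, expMeasure_Ioi hr (by positivity)]

lemma prod_expMeasure_lt_mul_div_affine {r₁ r₂ a c s x : ℝ} (hr₁ : 0 < r₁)
    (hr₂ : 0 < r₂) (ha : 0 < a) (hc : 0 ≤ c) (hs : 0 < s) (hx : 0 ≤ x) :
    (expMeasure r₁).prod (expMeasure r₂) {p | x < a * p.1 / (c * p.2 + s)}
      = ENNReal.ofReal (exp (-(r₁ * (x * s / a))))
        * ENNReal.ofReal (r₂ / (r₂ + r₁ * (x * c / a))) := by
  have := isProbabilityMeasure_expMeasure hr₁
  have := isProbabilityMeasure_expMeasure hr₂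
  have hmeas : MeasurableSet {p : ℝ × ℝ | x < a * p.1 / (c * p.2 + s)} :=
    measurableSet_lt measurable_const (by fun_prop)
  have hslice : ∀ᵐ v ∂expMeasure r₂,
      expMeasure r₁ ((fun u => (u, v)) ⁻¹' {p | x < a * p.1 / (c * p.2 + s)})
        = ENNReal.ofReal (exp (-(r₁ * (x * c / a) * v)))
          * ENNReal.ofReal (exp (-(r₁ * (x * s / a)))) := by
    filter_upwards [ae_nonneg_expMeasure r₂] with v hv
    simp only [preimage_ofPred_eq]
    rw [expMeasure_lt_mul_div hr₁ ha (by positivity) hx,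
      ← ENNReal.ofReal_mul (exp_nonneg _), ← exp_add]
    congr 2
    ring
  rw [Measure.prod_apply_symm hmeas, lintegral_congr_ae hslice, lintegral_mul_const _ (by fun_prop),
    lintegral_exp_neg_mul_expMeasure hr₂ (by positivity), mul_comm]

lemma expMeasure_lt_mul_div_affine_of_lt_div {r p q s x : ℝ} (hr : 0 < r) (hq : 0 < q)
    (hs : 0 < s) (hx₀ : 0 ≤ x) (hx : x < p / q) :
    expMeasure r {w | x < p * w / (q * w + s)}
      = ENNReal.ofReal (exp (-(r * (x * s / (p - q * x))))) := by
  have hgap : 0 < p - q * x := by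
    rw [lt_div_iff₀ hq] at hx
    linarith
  have hset : {w | x < p * w / (q * w + s)} =ᵐ[expMeasure r] Ioi (x * s / (p - q * x)) := by
    filter_upwards [ae_nonneg_expMeasure r] with w hw
    have hD : 0 < q * w + s := by positivity
    change (x < p * w / (q * w + s)) = (x * s / (p - q * x) < w)
    rw [lt_div_iff₀ hD, div_lt_iff₀ hgap, eq_iff_iff]
    constructor <;> intro h <;> nlinarith
  rw [measure_congr hset, expMeasure_Ioi hr (by positivity)]

lemma expMeasure_lt_mul_div_affine_of_div_le {r p q s x : ℝ} (hp : 0 ≤ p) (hq : 0 < q)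
    (hs : 0 < s) (hx : p / q ≤ x) :
    expMeasure r {w | x < p * w / (q * w + s)} = 0 := by
  have hx₀ : 0 ≤ x := (div_nonneg hp hq.le).trans hx
  rw [div_le_iff₀ hq] at hx
  refine measure_mono_null (fun w hw => ?_) (expMeasure_Iio_zero r)
  rw [mem_Iio]
  by_contra! hw₀
  rw [mem_ofPred_eq, lt_div_iff₀ (by positivity)] at hw
  nlinarith

end ProbabilityTheory

lemma ProbabilityTheory.IndepFun.measure_lt_min_eq_mul {Ω β γ : Type*} [MeasurableSpace Ω]
    [MeasurableSpace β] [MeasurableSpace γ] {μ : Measure Ω} {X : Ω → β} {Z : Ω → γ}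
    (hXZ : IndepFun X Z μ) (hX : Measurable X) (hZ : Measurable Z)
    {f : β → ℝ} {g : γ → ℝ} (hf : Measurable f) (hg : Measurable g) (x : ℝ) :
    μ {ω | x < min (f (X ω)) (g (Z ω))} = μ.map X {b | x < f b} * μ.map Z {c | x < g c} := by
  have hfx : MeasurableSet {b | x < f b} := measurableSet_lt measurable_const hf
  have hgx : MeasurableSet {c | x < g c} := measurableSet_lt measurable_const hg
  rw [Measure.map_apply hX hfx, Measure.map_apply hZ hgx,
    ← hXZ.measure_inter_preimage_eq_mul _ _ hfx hgx]
  congr 1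
  ext ω
  simp

lemma ProbabilityTheory.iIndepFun.measure_lt_min_eq_mul_prod {Ω β : Type*} [MeasurableSpace Ω]
    [MeasurableSpace β] {μ : Measure Ω} [IsProbabilityMeasure μ] {U V W : Ω → β}
    (hU : Measurable U) (hV : Measurable V) (hW : Measurable W) (hUVW : iIndepFun ![U, V, W] μ)
    {f : β × β → ℝ} {g : β → ℝ} (hf : Measurable f) (hg : Measurable g) (x : ℝ) :
    μ {ω | x < min (f (U ω, V ω)) (g (W ω))}
      = (μ.map U).prod (μ.map V) {p | x < f p} * μ.map W {w | x < g w} := by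
  have hUV_W : IndepFun (fun ω => (U ω, V ω)) W μ := by
    simpa using hUVW.indepFun_prodMk (fun i => by fin_cases i <;> assumption) 0 1 2
      (by decide) (by decide)
  have hUV : IndepFun U V μ := by
    simpa using hUVW.indepFun (show (0 : Fin 3) ≠ 1 by decide)
  rw [hUV_W.measure_lt_min_eq_mul (hU.prodMk hV) hW hf hg,
    (indepFun_iff_map_prod_eq_prod_map_map hU.aemeasurable hV.aemeasurable).1 hUV]

lemma MeasureTheory.toReal_prob_le_eq_one_sub {Ω : Type*} [MeasurableSpace Ω] {μ : Measure Ω}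
    [IsProbabilityMeasure μ] {Y : Ω → ℝ} (hY : Measurable Y) (x : ℝ) :
    (μ {ω | Y ω ≤ x}).toReal = 1 - (μ {ω | x < Y ω}).toReal := by
  simp_rw [← measureReal_def,
    ← probReal_compl_eq_one_sub (measurableSet_lt measurable_const hY), compl_ofPred, not_lt]

/-- **closed-form CDF of `Y_{H₁}`, equation (64) with φ = 1.**
With `U, V, W` mutually independent exponentials of means `Ω_SR, Ω_RR, Ω_RD`, the
end-to-end decode-and-forward SINR under hypothesis `H₁`
`Y = min{ (1−ρ)P_S·U / ((1−ρ)k(P_R+P_Δ)·V + σ_R²), P_R·W/(P_Δ·W + σ_D²) }` satisfies: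
for `0 ≤ x < P_R/P_Δ`,
`P(Y ≤ x) = 1 − (P_S·Ω_SR/(P_S·Ω_SR + k(P_R+P_Δ)Ω_RR·x))·
  exp(−(σ_R²/((1−ρ)P_S·Ω_SR))·x − (σ_D²/((P_R − P_Δ·x)·Ω_RD))·x)`,
and for `x ≥ P_R/P_Δ`, `P(Y ≤ x) = 1`. -/
theorem cdf_Y_H1
    {α : Type*} [MeasureSpace α] [IsProbabilityMeasure (ℙ : Measure α)]
    (U V W : α → ℝ) (hUm : Measurable U) (hVm : Measurable V) (hWm : Measurable W)
    (ρ P_S P_R P_Δ k σR2 σD2 Ω_SR Ω_RR Ω_RD : ℝ)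
    (hρ : ρ ∈ Set.Ioo (0 : ℝ) 1) (hPS : 0 < P_S) (hPR : 0 < P_R) (hPΔ : 0 < P_Δ)
    (hk : k ∈ Set.Ioc (0 : ℝ) 1) (hσR : 0 < σR2) (hσD : 0 < σD2)
    (hΩSR : 0 < Ω_SR) (hΩRR : 0 < Ω_RR) (hΩRD : 0 < Ω_RD)
    (hU : Measure.map U ℙ = expMeasure (1 / Ω_SR))
    (hV : Measure.map V ℙ = expMeasure (1 / Ω_RR))
    (hW : Measure.map W ℙ = expMeasure (1 / Ω_RD))
    (hindep : iIndepFun (m := fun _ : Fin 3 => (inferInstance : MeasurableSpace ℝ))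
      ![U, V, W] ℙ)
    (Y : α → ℝ)
    (hY : ∀ ω, Y ω = min
        ((1 - ρ) * P_S * U ω / ((1 - ρ) * k * (P_R + P_Δ) * V ω + σR2))
        (P_R * W ω / (P_Δ * W ω + σD2))) :
    (∀ x : ℝ, 0 ≤ x → x < P_R / P_Δ →
      (ℙ {ω | Y ω ≤ x}).toReal
        = 1 - (P_S * Ω_SR / (P_S * Ω_SR + k * (P_R + P_Δ) * Ω_RR * x))
            * exp (-(σR2 / ((1 - ρ) * P_S * Ω_SR)) * x
              - (σD2 / ((P_R - P_Δ * x) * Ω_RD)) * x)) ∧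
    (∀ x : ℝ, P_R / P_Δ ≤ x → (ℙ {ω | Y ω ≤ x}).toReal = 1) := by
  have h1ρ : 0 < 1 - ρ := sub_pos.2 hρ.2
  have hk₀ : 0 < k := hk.1
  have hsurv (x : ℝ) : ℙ {ω | x < Y ω}
      = (expMeasure (1 / Ω_SR)).prod (expMeasure (1 / Ω_RR))
          {p | x < (1 - ρ) * P_S * p.1 / ((1 - ρ) * k * (P_R + P_Δ) * p.2 + σR2)}
        * expMeasure (1 / Ω_RD) {w | x < P_R * w / (P_Δ * w + σD2)} := by
    simp_rw [hY, ← hU, ← hV, ← hW]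
    exact hindep.measure_lt_min_eq_mul_prod hUm hVm hWm
      (f := fun p => (1 - ρ) * P_S * p.1 / ((1 - ρ) * k * (P_R + P_Δ) * p.2 + σR2))
      (g := fun w => P_R * w / (P_Δ * w + σD2)) (by fun_prop) (by fun_prop) x
  have hYm : Measurable Y := by
    rw [show Y = _ from funext hY]
    fun_prop
  refine ⟨fun x hx₀ hx => ?_, fun x hx => ?_⟩
  · rw [toReal_prob_le_eq_one_sub hYm, hsurv,
      prod_expMeasure_lt_mul_div_affine (by positivity) (by positivity) (by positivity)
        (by positivity) hσR hx₀,
      expMeasure_lt_mul_div_affine_of_lt_div (by positivity) hPΔ hσD hx₀ hx]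
    have hgap : 0 < P_R - P_Δ * x := by
      rw [lt_div_iff₀ hPΔ] at hx
      linarith
    rw [ENNReal.toReal_mul, ENNReal.toReal_mul, ENNReal.toReal_ofReal (exp_nonneg _),
      ENNReal.toReal_ofReal (exp_nonneg _), ENNReal.toReal_ofReal (by positivity), mul_right_comm,
      ← exp_add, mul_comm]
    congr 2
    · field_simp
    · congr 1
      field_simp
      ring
  · rw [toReal_prob_le_eq_one_sub hYm, hsurv,
      expMeasure_lt_mul_div_affine_of_div_le hPR.le hPΔ hσD hx, mul_zero, ENNReal.toReal_zero,
      sub_zero]
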